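/- Let b, p ∈ ℂ and let I ⊆ F be the two-sided ideal generated by the six elements x₂x₁ + x₁x₂, x₃x₁ + x₁x₃, x₃x₂ + x₂x₃ − b x₁x₂, x₁², x₂², and x₃² − b x₁x₃ + p x₁x₂. Then the quotient algebra F/I has ℂ-dimension 8, and the images of the eight monomials x₁^{e₁} x₂^{e₂} x₃^{e₃} with e₁, e₂, e₃ ∈ {0, 1} form a ℂ-basis of F/I. (This quotient is the Nichols algebra associated to the braiding of type R_{1,1} with t = −1.) -/

import Mathlib

/-- The free associative unital `ℂ`-algebra on three generators. -/
abbrev F : Type := FreeAlgebra ℂ (Fin 3)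

/-- The generators `x₁ = X 0`, `x₂ = X 1`, `x₃ = X 2`. -/
noncomputable def X (i : Fin 3) : F := FreeAlgebra.ι ℂ i

/-- Generators: `x₂x₁ + x₁x₂`, `x₃x₁ + x₁x₃`, `x₃x₂ + x₂x₃ − b x₁x₂`, `x₁²`, `x₂²`, `x₃² − b x₁x₃ + p x₁x₂`. -/
noncomputable def S (b p : ℂ) : Set F :=
  {X 1 * X 0 + X 0 * X 1,
   X 2 * X 0 + X 0 * X 2,
   X 2 * X 1 + X 1 * X 2 - b • (X 0 * X 1),
   X 0 * X 0,
   X 1 * X 1,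
   X 2 * X 2 - b • (X 0 * X 2) + p • (X 0 * X 1)}

/-- The relation whose two-sided-ideal closure is the ideal generated by `S`;
`RingQuot rel` is the quotient `F/I`. -/
def rel (b p : ℂ) : F → F → Prop := fun x y => x ∈ S b p ∧ y = 0

/-!
Left multiplication by the generators sends the span `M` of the eight ordered monomials
`x₁^{e₁} x₂^{e₂} x₃^{e₃}` into itself: the defining relations rewrite every product
`xᵢ · x^e` into normal order, with coefficients recorded in three explicit `8 × 8` matrices.
Since `M` contains `1` and the generators generate `F/I`, `M` is everything. Conversely those
matrices satisfy the defining relations, so they give a representation of `F/I`; applied to the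
basis vector of the empty monomial, it sends `x^e` to the basis vector of `e`, which proves
linear independence.
-/

open Matrix

theorem mul_mul_of_mul_eq {A : Type*} [Semigroup A] {a b c : A} (h : a * b = c) (z : A) :
    a * (b * z) = c * z := by
  rw [← mul_assoc, h]

theorem Submodule.eq_top_of_mul_mem_of_adjoin_eq_top {R A : Type*} [CommSemiring R] [Semiring A]
    [Algebra R A] {s : Set A} (hs : Algebra.adjoin R s = ⊤) {M : Submodule R A} (one_mem : 1 ∈ M)
    (mul_mem : ∀ x ∈ s, ∀ m ∈ M, x * m ∈ M) : M = ⊤ := by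
  suffices ∀ a : A, ∀ m ∈ M, a * m ∈ M from
    eq_top_iff.2 fun a _ => by simpa using this a 1 one_mem
  intro a
  induction (hs ▸ Algebra.mem_top : a ∈ Algebra.adjoin R s) using Algebra.adjoin_induction with
  | mem x hx => exact mul_mem x hx
  | algebraMap r => intro m hm; rw [← Algebra.smul_def]; exact M.smul_mem r hm
  | add x y _ _ hx hy => intro m hm; rw [add_mul]; exact add_mem (hx m hm) (hy m hm)
  | mul x y _ _ hx hy => intro m hm; rw [mul_assoc]; exact hx _ (hy m hm)

abbrev Exponents : Type := Fin 2 × Fin 2 × Fin 2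

noncomputable def orderedMonomial (e : Exponents) : F :=
  X 0 ^ (e.1 : ℕ) * X 1 ^ (e.2.1 : ℕ) * X 2 ^ (e.2.2 : ℕ)

/-- Column `e` of `leftMulMatrix b p i` holds the coefficients of `X i * orderedMonomial e`,
written in normal order modulo the relations, in the ordered monomials. -/
noncomputable def leftMulMatrix (b p : ℂ) : Fin 3 → Matrix Exponents Exponents ℂ :=
  ![single (1, 0, 0) (0, 0, 0) 1 + single (1, 0, 1) (0, 0, 1) 1 +
      single (1, 1, 0) (0, 1, 0) 1 + single (1, 1, 1) (0, 1, 1) 1,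
    single (0, 1, 0) (0, 0, 0) 1 + single (0, 1, 1) (0, 0, 1) 1 -
      single (1, 1, 0) (1, 0, 0) 1 - single (1, 1, 1) (1, 0, 1) 1,
    single (0, 0, 1) (0, 0, 0) 1 + b • single (1, 0, 1) (0, 0, 1) 1 -
      p • single (1, 1, 0) (0, 0, 1) 1 + b • single (1, 1, 0) (0, 1, 0) 1 -
      single (0, 1, 1) (0, 1, 0) 1 + (2 * b) • single (1, 1, 1) (0, 1, 1) 1 -
      single (1, 0, 1) (1, 0, 0) 1 + single (1, 1, 1) (1, 1, 0) 1]

section Quotient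

variable (b p : ℂ)

local notation "mk" => RingQuot.mkAlgHom ℂ (rel b p)

theorem mk_eq_of_sub_eq {u v s : F} (hs : s ∈ S b p) (h : u - v = s) : mk u = mk v := by
  have hs₀ : mk s = 0 := by simpa using RingQuot.mkAlgHom_rel ℂ (show rel b p s 0 from ⟨hs, rfl⟩)
  rw [← sub_add_cancel u v, h, map_add, hs₀, zero_add]

-- The relations are stated with `(-1 : ℂ) •` rather than `-`: negation on `RingQuot (rel b p)`
-- comes from `Ring F`, whose `Semiring F` is not reducibly the one `rel` is stated over, so `simp`
-- and `module` cannot see through it.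

theorem mk_X1_mul_X0 : mk (X 1) * mk (X 0) = (-1 : ℂ) • (mk (X 0) * mk (X 1)) := by
  simpa only [map_mul, map_smul] using mk_eq_of_sub_eq b p
    (u := X 1 * X 0) (v := (-1 : ℂ) • (X 0 * X 1)) (s := X 1 * X 0 + X 0 * X 1)
    (by simp [S]) (by module)

theorem mk_X2_mul_X0 : mk (X 2) * mk (X 0) = (-1 : ℂ) • (mk (X 0) * mk (X 2)) := by
  simpa only [map_mul, map_smul] using mk_eq_of_sub_eq b p
    (u := X 2 * X 0) (v := (-1 : ℂ) • (X 0 * X 2)) (s := X 2 * X 0 + X 0 * X 2)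
    (by simp [S]) (by module)

theorem mk_X2_mul_X1 :
    mk (X 2) * mk (X 1) = b • (mk (X 0) * mk (X 1)) + (-1 : ℂ) • (mk (X 1) * mk (X 2)) := by
  simpa only [map_add, map_mul, map_smul] using mk_eq_of_sub_eq b p
    (u := X 2 * X 1) (v := b • (X 0 * X 1) + (-1 : ℂ) • (X 1 * X 2))
    (s := X 2 * X 1 + X 1 * X 2 - b • (X 0 * X 1)) (by simp [S]) (by module)

theorem mk_X0_mul_X0 : mk (X 0) * mk (X 0) = 0 := by
  simpa only [map_mul, map_zero] using mk_eq_of_sub_eq b p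
    (u := X 0 * X 0) (v := 0) (s := X 0 * X 0) (by simp [S]) (by module)

theorem mk_X1_mul_X1 : mk (X 1) * mk (X 1) = 0 := by
  simpa only [map_mul, map_zero] using mk_eq_of_sub_eq b p
    (u := X 1 * X 1) (v := 0) (s := X 1 * X 1) (by simp [S]) (by module)

theorem mk_X2_mul_X2 :
    mk (X 2) * mk (X 2) = b • (mk (X 0) * mk (X 2)) + (-p) • (mk (X 0) * mk (X 1)) := by
  simpa only [map_add, map_mul, map_smul] using mk_eq_of_sub_eq b p
    (u := X 2 * X 2) (v := b • (X 0 * X 2) + (-p) • (X 0 * X 1))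
    (s := X 2 * X 2 - b • (X 0 * X 2) + p • (X 0 * X 1)) (by simp [S]) (by module)

set_option maxHeartbeats 400000 in
theorem mk_X_mul_orderedMonomial (i : Fin 3) (e : Exponents) :
    mk (X i) * mk (orderedMonomial e) =
      ∑ e', leftMulMatrix b p i e' e • mk (orderedMonomial e') := by
  simp only [Fintype.sum_prod_type, Fin.sum_univ_two]
  fin_cases i <;> obtain ⟨a, c, d⟩ := e <;> fin_cases a <;> fin_cases c <;> fin_cases d <;>
    simp only [orderedMonomial, Fin.zero_eta, Fin.mk_one, Fin.reduceFinMk, Fin.isValue,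
      Fin.val_zero, Fin.val_one, pow_zero, pow_one, mul_one, one_mul, map_mul, map_one, mul_assoc,
      mul_add, add_mul, smul_mul_assoc, mul_smul_comm, mul_zero, zero_mul, smul_zero, add_zero,
      zero_add, mk_X1_mul_X0, mk_X2_mul_X0, mk_X2_mul_X1, mk_X0_mul_X0, mk_X1_mul_X1, mk_X2_mul_X2,
      mul_mul_of_mul_eq (mk_X1_mul_X0 b p), mul_mul_of_mul_eq (mk_X2_mul_X0 b p),
      mul_mul_of_mul_eq (mk_X2_mul_X1 b p), mul_mul_of_mul_eq (mk_X0_mul_X0 b p),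
      mul_mul_of_mul_eq (mk_X1_mul_X1 b p)] <;>
    match_scalars <;> simp [leftMulMatrix, two_mul]

theorem adjoin_range_mk_X : Algebra.adjoin ℂ (Set.range fun i => mk (X i)) = ⊤ := by
  rw [show (Set.range fun i => mk (X i)) = mk '' Set.range (FreeAlgebra.ι ℂ) by
      rw [← Set.range_comp]; rfl,
    Algebra.adjoin_image, FreeAlgebra.adjoin_range_ι, Algebra.map_top, AlgHom.range_eq_top]
  exact RingQuot.mkAlgHom_surjective ℂ (rel b p)

theorem span_mk_orderedMonomial :
    Submodule.span ℂ (Set.range fun e => mk (orderedMonomial e)) = ⊤ := by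
  refine Submodule.eq_top_of_mul_mem_of_adjoin_eq_top (adjoin_range_mk_X b p) ?_ ?_
  · exact Submodule.subset_span ⟨(0, 0, 0), by simp [orderedMonomial]⟩
  · rintro _ ⟨i, rfl⟩ m hm
    induction hm using Submodule.span_induction with
    | mem _ he =>
      obtain ⟨e, rfl⟩ := he
      rw [mk_X_mul_orderedMonomial]
      exact Submodule.sum_mem _ fun e' _ =>
        Submodule.smul_mem _ _ (Submodule.subset_span ⟨e', rfl⟩)
    | zero => simp
    | add _ _ _ _ hu hv => rw [mul_add]; exact add_mem hu hv
    | smul c _ _ hu => rw [mul_smul_comm]; exact Submodule.smul_mem _ c hu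

end Quotient

noncomputable def leftMulRep (b p : ℂ) : F →ₐ[ℂ] Matrix Exponents Exponents ℂ :=
  FreeAlgebra.lift ℂ (leftMulMatrix b p)

theorem leftMulRep_X (b p : ℂ) (i : Fin 3) : leftMulRep b p (X i) = leftMulMatrix b p i :=
  FreeAlgebra.lift_ι_apply _ _

theorem leftMulRep_eq_zero_of_mem {b p : ℂ} {s : F} (hs : s ∈ S b p) :
    leftMulRep b p s = 0 := by
  simp only [S, Set.mem_insert_iff, Set.mem_singleton_iff] at hs
  rcases hs with rfl | rfl | rfl | rfl | rfl | rfl <;>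
    simp only [map_add, map_sub, map_mul, map_smul, leftMulRep_X, leftMulMatrix, Fin.isValue,
      cons_val, cons_val_zero, cons_val_one, mul_add, add_mul, sub_mul, mul_sub, smul_mul_assoc,
      mul_smul_comm, single_mul_single_same, mul_one, ne_eq, Prod.mk.injEq, zero_ne_one,
      one_ne_zero, and_true, and_false, and_self, not_false_eq_true, single_mul_single_of_ne,
      smul_zero, add_zero, zero_add, sub_zero, zero_sub, sub_self] <;>
    module

theorem leftMulRep_orderedMonomial_mul_single (b p : ℂ) (e : Exponents) :
    leftMulRep b p (orderedMonomial e) * single (0, 0, 0) (0, 0, 0) 1 = single e (0, 0, 0) 1 := by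
  obtain ⟨a, c, d⟩ := e
  fin_cases a <;> fin_cases c <;> fin_cases d <;>
    simp [orderedMonomial, leftMulRep_X, leftMulMatrix, mul_assoc, add_mul, sub_mul]

noncomputable def leftMulRepQuot (b p : ℂ) :
    RingQuot (rel b p) →ₐ[ℂ] Matrix Exponents Exponents ℂ :=
  RingQuot.liftAlgHom ℂ ⟨leftMulRep b p, fun _ _ ⟨hs, h⟩ =>
    h ▸ (leftMulRep_eq_zero_of_mem hs).trans (map_zero _).symm⟩

theorem linearIndependent_mk_orderedMonomial (b p : ℂ) :
    LinearIndependent ℂ fun e => RingQuot.mkAlgHom ℂ (rel b p) (orderedMonomial e) := by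
  let firstColumn :=
    LinearMap.mulRight ℂ (single (0, 0, 0) (0, 0, 0) 1) ∘ₗ (leftMulRepQuot b p).toLinearMap
  refine LinearIndependent.of_comp firstColumn ?_
  have : firstColumn ∘ (fun e => RingQuot.mkAlgHom ℂ (rel b p) (orderedMonomial e)) =
      stdBasis ℂ Exponents Exponents ∘ fun e => (e, (0, 0, 0)) := by
    ext1 e
    simp [firstColumn, leftMulRepQuot, leftMulRep_orderedMonomial_mul_single, stdBasis_eq_single]
  rw [this]
  exact (stdBasis ℂ _ _).linearIndependent.comp _ fun _ _ h => (Prod.mk.inj h).1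

theorem dim_eight_R11_t_neg_one (b p : ℂ) :
    Module.finrank ℂ (RingQuot (rel b p)) = 8 ∧
    LinearIndependent ℂ (fun e : Fin 2 × Fin 2 × Fin 2 =>
      RingQuot.mkAlgHom ℂ (rel b p) (X 0 ^ (e.1 : ℕ) * X 1 ^ (e.2.1 : ℕ) * X 2 ^ (e.2.2 : ℕ))) ∧
    Submodule.span ℂ (Set.range (fun e : Fin 2 × Fin 2 × Fin 2 =>
      RingQuot.mkAlgHom ℂ (rel b p) (X 0 ^ (e.1 : ℕ) * X 1 ^ (e.2.1 : ℕ) * X 2 ^ (e.2.2 : ℕ)))) = ⊤ := by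
  have independent := linearIndependent_mk_orderedMonomial b p
  have spanning := span_mk_orderedMonomial b p
  refine ⟨?_, independent, spanning⟩
  rw [Module.finrank_eq_card_basis (Module.Basis.mk independent spanning.ge)]
  rfl
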